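/- arXiv:1807.10832 — 2 statements merged into one kernel-verified Lean document; each statement's English description precedes it below -/
import Mathlib

section
/- Let S ⊆ ℝⁿ be nonempty, closed and convex, let g : ℝⁿ → ℝ be differentiable and γ-strongly convex on S (γ > 0), let x̄ ∈ S be a minimizer of g over S, and let x̂ ∈ S. Then (γ/2)‖x̂ − x̄‖² ≤ ⟨∇_S g(x̂), x̄ − x̂⟩ ≤ ‖∇_S g(x̂)‖ ‖x̄ − x̂‖, and consequently ‖x̂ − x̄‖ ≤ (2/γ) ‖∇_S g(x̂)‖, where ∇_S g(x̂) is the projected gradient of g at x̂. -/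
/-- The tangent cone to `S` at `x`: the closure of `{t • (z - x) : t ≥ 0, z ∈ S}`. -/
def tangentConeTo {n : ℕ} (S : Set (EuclideanSpace ℝ (Fin n)))
    (x : EuclideanSpace ℝ (Fin n)) : Set (EuclideanSpace ℝ (Fin n)) :=
  closure {v | ∃ t : ℝ, 0 ≤ t ∧ ∃ z ∈ S, v = t • (z - x)}

/-- `v` is the projected gradient of `g` at `x` w.r.t. `S`: `v` is the point of the
tangent cone `T_S(x)` nearest to `-∇g(x)`. -/
def IsProjGrad {n : ℕ} (S : Set (EuclideanSpace ℝ (Fin n)))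
    (g : EuclideanSpace ℝ (Fin n) → ℝ) (x v : EuclideanSpace ℝ (Fin n)) : Prop :=
  v ∈ tangentConeTo S x ∧
    ∀ w ∈ tangentConeTo S x, ‖-gradient g x - v‖ ≤ ‖-gradient g x - w‖

/-!
Strong convexity of `g` gives `⟪∇g(x̂), x̄ - x̂⟫ + (γ/2)‖x̄ - x̂‖² ≤ g x̄ - g x̂ ≤ 0`. Since
`x̄ - x̂` lies in the tangent cone `T`, which is a convex cone, the variational inequality for the
projection `∇_S g(x̂)` of `-∇g(x̂)` onto `T`, tested at `∇_S g(x̂) + (x̄ - x̂) ∈ T`, gives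
`⟪-∇g(x̂), x̄ - x̂⟫ ≤ ⟪∇_S g(x̂), x̄ - x̂⟫`. Cauchy–Schwarz and division by `‖x̄ - x̂‖` finish.
-/

open scoped RealInnerProductSpace

theorem ConvexOn.hasFDerivAt_apply_sub_le {E : Type*} [NormedAddCommGroup E] [NormedSpace ℝ E]
    {s : Set E} {f : E → ℝ} {f' : E →L[ℝ] ℝ} {x y : E}
    (hf : ConvexOn ℝ s f) (hx : x ∈ s) (hy : y ∈ s) (hf' : HasFDerivAt f f' x) :
    f' (y - x) ≤ f y - f x := by
  let ℓ : ℝ →ᵃ[ℝ] E := AffineMap.lineMap x y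
  have hderiv : HasDerivAt (f ∘ ℓ) (f' (y - x)) 0 :=
    hf'.comp_hasDerivAt_of_eq 0 AffineMap.hasDerivAt_lineMap (by simp [ℓ])
  simpa [slope_def_field, ℓ] using (hf.comp_affineMap ℓ).le_slope_of_hasDerivAt
    (x := 0) (y := 1) (by simpa [ℓ]) (by simpa [ℓ]) zero_lt_one hderiv

theorem ConvexOn.inner_add_half_mul_norm_sq_le_of_hasGradientAt {F : Type*}
    [NormedAddCommGroup F] [InnerProductSpace ℝ F] [CompleteSpace F]
    {s : Set F} {g : F → ℝ} {g' : F} {γ : ℝ} {x y : F}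
    (hg : ConvexOn ℝ s (fun z => g z - γ / 2 * ‖z‖ ^ 2)) (hx : x ∈ s) (hy : y ∈ s)
    (hg' : HasGradientAt g g' x) :
    ⟪g', y - x⟫ + γ / 2 * ‖y - x‖ ^ 2 ≤ g y - g x := by
  have key := hg.hasFDerivAt_apply_sub_le hx hy
    (hg'.hasFDerivAt.sub ((hasStrictFDerivAt_norm_sq x).hasFDerivAt.const_mul (γ / 2)))
  simp only [sub_apply, smul_apply,
    InnerProductSpace.toDual_apply_apply, innerSL_apply_apply, nsmul_eq_mul, smul_eq_mul,
    Nat.cast_ofNat] at key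
  have hsq : ‖y - x‖ ^ 2 = ‖y‖ ^ 2 - ‖x‖ ^ 2 - 2 * ⟪x, y - x⟫ := by
    rw [norm_sub_sq_real, inner_sub_right, real_inner_self_eq_norm_sq, real_inner_comm]
    ring
  rw [hsq]
  linarith

theorem real_inner_sub_sub_nonpos_of_forall_norm_sub_le {F : Type*}
    [NormedAddCommGroup F] [InnerProductSpace ℝ F] {K : Set F} (hK : Convex ℝ K) {u v w : F}
    (hv : v ∈ K) (hmin : ∀ w ∈ K, ‖u - v‖ ≤ ‖u - w‖) (hw : w ∈ K) :
    ⟪u - v, w - v⟫ ≤ 0 := by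
  have : Nonempty K := ⟨⟨v, hv⟩⟩
  have hinf : ‖u - v‖ = ⨅ w : K, ‖u - w‖ :=
    le_antisymm (le_ciInf fun w => hmin w w.2)
      (ciInf_le ⟨0, Set.forall_mem_range.2 fun w : K => norm_nonneg (u - w)⟩ ⟨v, hv⟩)
  exact (norm_eq_iInf_iff_real_inner_le_zero hK hv).1 hinf w hw

section TangentCone

variable {n : ℕ} {S : Set (EuclideanSpace ℝ (Fin n))} {x : EuclideanSpace ℝ (Fin n)}

theorem sub_mem_tangentConeTo {z : EuclideanSpace ℝ (Fin n)} (hz : z ∈ S) :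
    z - x ∈ tangentConeTo S x :=
  subset_closure ⟨1, zero_le_one, z, hz, (one_smul ℝ _).symm⟩

theorem tangentConeTo_smul_mem {v : EuclideanSpace ℝ (Fin n)} {t : ℝ} (ht : 0 ≤ t)
    (hv : v ∈ tangentConeTo S x) : t • v ∈ tangentConeTo S x := by
  refine map_mem_closure (continuous_const_smul t) hv ?_
  rintro _ ⟨s, hs, z, hz, rfl⟩
  exact ⟨t * s, mul_nonneg ht hs, z, hz, (mul_smul t s _).symm⟩

theorem tangentConeTo_add_mem (hS : Convex ℝ S) {a b : EuclideanSpace ℝ (Fin n)}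
    (ha : a ∈ tangentConeTo S x) (hb : b ∈ tangentConeTo S x) :
    a + b ∈ tangentConeTo S x := by
  refine map_mem_closure₂ continuous_add ha hb ?_
  rintro _ ⟨s, hs, z, hz, rfl⟩ _ ⟨t, ht, w, hw, rfl⟩
  rcases (add_nonneg hs ht).eq_or_lt with hst | hst
  · obtain ⟨rfl, rfl⟩ : s = 0 ∧ t = 0 := ⟨by linarith, by linarith⟩
    exact ⟨0, le_rfl, z, hz, by simp⟩
  -- `s • (z - x) + t • (w - x) = (s + t) • (c - x)` for the convex combination `c` of `z` and `w`
  refine ⟨s + t, hst.le, (s / (s + t)) • z + (t / (s + t)) • w,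
    hS hz hw (div_nonneg hs hst.le) (div_nonneg ht hst.le) (by field_simp), ?_⟩
  rw [smul_sub (s + t), smul_add, smul_smul, smul_smul, mul_div_cancel₀ _ hst.ne',
    mul_div_cancel₀ _ hst.ne']
  module

theorem convex_tangentConeTo (hS : Convex ℝ S) : Convex ℝ (tangentConeTo S x) :=
  fun _ hp _ hq _ _ ha hb _ =>
    tangentConeTo_add_mem hS (tangentConeTo_smul_mem ha hp) (tangentConeTo_smul_mem hb hq)

theorem IsProjGrad.inner_neg_gradient_le {g : EuclideanSpace ℝ (Fin n) → ℝ}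
    {v z : EuclideanSpace ℝ (Fin n)} (hS : Convex ℝ S) (hv : IsProjGrad S g x v) (hz : z ∈ S) :
    ⟪-gradient g x, z - x⟫ ≤ ⟪v, z - x⟫ := by
  have := real_inner_sub_sub_nonpos_of_forall_norm_sub_le (convex_tangentConeTo hS) hv.1 hv.2
    (tangentConeTo_add_mem hS hv.1 (sub_mem_tangentConeTo hz))
  rw [add_sub_cancel_left, inner_sub_left] at this
  linarith

end TangentCone

theorem stmt_7_general {n : ℕ}
    (S : Set (EuclideanSpace ℝ (Fin n)))
    (hSconv : Convex ℝ S)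
    (g : EuclideanSpace ℝ (Fin n) → ℝ) (γ : ℝ) (hγ : 0 < γ)
    (hgdiff : Differentiable ℝ g)
    (hgsc : ConvexOn ℝ S (fun z => g z - γ / 2 * ‖z‖ ^ 2))
    (xb xh : EuclideanSpace ℝ (Fin n)) (hxbS : xb ∈ S) (hxhS : xh ∈ S)
    (hxbmin : ∀ z ∈ S, g xb ≤ g z)
    (pg : EuclideanSpace ℝ (Fin n)) (hpg : IsProjGrad S g xh pg) :
    γ / 2 * ‖xh - xb‖ ^ 2 ≤ (inner ℝ pg (xb - xh) : ℝ) ∧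
    (inner ℝ pg (xb - xh) : ℝ) ≤ ‖pg‖ * ‖xb - xh‖ ∧
    ‖xh - xb‖ ≤ 2 / γ * ‖pg‖ := by
  have hfirst := hgsc.inner_add_half_mul_norm_sq_le_of_hasGradientAt hxhS hxbS
    (hgdiff xh).hasGradientAt
  have hproj := hpg.inner_neg_gradient_le hSconv hxbS
  rw [inner_neg_left] at hproj
  have hlower : γ / 2 * ‖xh - xb‖ ^ 2 ≤ ⟪pg, xb - xh⟫ := by
    rw [norm_sub_rev]
    linarith [hxbmin xh hxhS]
  have hcs := real_inner_le_norm pg (xb - xh)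
  refine ⟨hlower, hcs, ?_⟩
  rw [norm_sub_rev xb] at hcs
  rcases (norm_nonneg (xh - xb)).eq_or_lt with h0 | hpos
  · rw [← h0]
    positivity
  · rw [div_mul_eq_mul_div, le_div_iff₀ hγ]
    nlinarith

theorem stmt_7 {n : ℕ}
    (S : Set (EuclideanSpace ℝ (Fin n)))
    (hSne : S.Nonempty) (hScl : IsClosed S) (hSconv : Convex ℝ S)
    (g : EuclideanSpace ℝ (Fin n) → ℝ) (γ : ℝ) (hγ : 0 < γ)
    (hgdiff : Differentiable ℝ g)
    (hgsc : ConvexOn ℝ S (fun z => g z - γ / 2 * ‖z‖ ^ 2))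
    (xb xh : EuclideanSpace ℝ (Fin n)) (hxbS : xb ∈ S) (hxhS : xh ∈ S)
    (hxbmin : ∀ z ∈ S, g xb ≤ g z)
    (pg : EuclideanSpace ℝ (Fin n)) (hpg : IsProjGrad S g xh pg) :
    γ / 2 * ‖xh - xb‖ ^ 2 ≤ (inner ℝ pg (xb - xh) : ℝ) ∧
    (inner ℝ pg (xb - xh) : ℝ) ≤ ‖pg‖ * ‖xb - xh‖ ∧
    ‖xh - xb‖ ≤ 2 / γ * ‖pg‖ :=
  stmt_7_general S hSconv g γ hγ hgdiff hgsc xb xh hxbS hxhS hxbmin pg hpg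
end

section
/- Suppose in addition that y_j ≥ 0 for all j, λ > 0, and S ⊆ {x ∈ ℝⁿ : x ≥ 0} is a nonempty, closed, convex set. Then the problem of minimizing D_KL(x) + λ·TV(x) over x ∈ S admits a solution, where TV(x) = Σ_{i=1}^N ‖L_i x‖ for a finite family of linear maps L_i : ℝⁿ → ℝ² (in the paper, the discrete difference operators D_i). If moreover y_j > 0 for all j and the linear map x ↦ Ax is injective, the solution is unique. -/
/-!
The fidelity is a sum of one-dimensional terms `y log (y / t) + t - y` evaluated at the forward
model `t = (A x + b)_j`, which is positive on `S`. Each term is at least `t / 2 - y log 2`, and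
since the columns of `A` sum to one, `∑ⱼ (A x + b)_j ≥ ∑ᵢ xᵢ ≥ ‖x‖` on the nonnegative orthant.
So the objective grows at least like `‖x‖ / 2` on `S`, and being continuous it attains its
minimum on the closed set `S`. For `y > 0` each term is strictly convex in `t` (strict concavity
of `log`), so the fidelity is strictly convex in `A x + b`, hence in `x` when `A` is injective;
adding the convex TV term keeps it strictly convex, and a strictly convex function has at most one
minimiser on a convex set.
-/

open Real Set Finset Matrix

theorem convexOn_finsetSum {E ι : Type*} [AddCommGroup E] [Module ℝ E] {s : Set E}
    {t : Finset ι} {f : ι → E → ℝ} (hs : Convex ℝ s) (hf : ∀ i ∈ t, ConvexOn ℝ s (f i)) :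
    ConvexOn ℝ s (fun x => ∑ i ∈ t, f i x) := by
  classical
  induction t using Finset.induction_on with
  | empty => simpa using convexOn_const 0 hs
  | insert i t hi ih =>
    simp only [sum_insert hi]
    exact (hf i (mem_insert_self i t)).add (ih fun j hj => hf j (mem_insert_of_mem hj))

theorem strictConvexOn_pi_sum {ι : Type*} [Fintype ι] {s : Set ℝ} {f : ι → ℝ → ℝ}
    (hf : ∀ j, StrictConvexOn ℝ s (f j)) :
    StrictConvexOn ℝ (univ.pi fun _ => s) (fun u : ι → ℝ => ∑ j, f j (u j)) := by
  refine ⟨convex_pi fun j _ => (hf j).1, fun u hu v hv huv a b ha hb hab => ?_⟩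
  obtain ⟨j, hj⟩ := Function.ne_iff.1 huv
  simp only [smul_eq_mul, mul_sum, ← sum_add_distrib, Pi.add_apply, Pi.smul_apply]
  exact sum_lt_sum
    (fun i _ => (hf i).convexOn.2 (hu i trivial) (hv i trivial) ha.le hb.le hab)
    ⟨j, mem_univ j, (hf j).2 (hu j trivial) (hv j trivial) hj ha hb hab⟩

theorem continuousOn_pi_sum {ι : Type*} [Fintype ι] {s : Set ℝ} {f : ι → ℝ → ℝ}
    (hf : ∀ j, ContinuousOn (f j) s) :
    ContinuousOn (fun u : ι → ℝ => ∑ j, f j (u j)) (univ.pi fun _ => s) :=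
  continuousOn_finsetSum _ fun j _ =>
    (hf j).comp (continuous_apply j).continuousOn fun _ hu => hu j trivial

theorem StrictConvexOn.comp_affineMap_of_injective {𝕜 E F β : Type*} [Ring 𝕜] [PartialOrder 𝕜]
    [AddCommGroup E] [AddCommGroup F] [AddCommMonoid β] [PartialOrder β]
    [Module 𝕜 E] [Module 𝕜 F] [SMul 𝕜 β] {f : F → β} (g : E →ᵃ[𝕜] F)
    (hg : Function.Injective g) {s : Set F} (hf : StrictConvexOn 𝕜 s f) :
    StrictConvexOn 𝕜 (g ⁻¹' s) (f ∘ g) :=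
  ⟨hf.1.affine_preimage _, fun x hx y hy hxy a b ha hb hab => by
    simpa only [Function.comp, Convex.combo_affine_apply hab]
      using hf.2 hx hy (hg.ne hxy) ha hb hab⟩

theorem ContinuousOn.exists_isMinOn_of_le_norm {E : Type*} [NormedAddCommGroup E] [ProperSpace E]
    {S : Set E} {f : E → ℝ} (hf : ContinuousOn f S) (hS : IsClosed S) (hne : S.Nonempty)
    {c C : ℝ} (hc : 0 < c) (hlb : ∀ x ∈ S, c * ‖x‖ + C ≤ f x) : ∃ x ∈ S, IsMinOn f S x := by
  obtain ⟨x₀, hx₀⟩ := hne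
  refine hf.exists_isMinOn' hS hx₀ ?_
  rw [Filter.eventually_inf_principal]
  refine Filter.hasBasis_cocompact.eventually_iff.2
    ⟨Metric.closedBall 0 ((f x₀ - C) / c), isCompact_closedBall _ _, fun x hxK hxS => ?_⟩
  have hR : (f x₀ - C) / c < ‖x‖ := by simpa using hxK
  rw [div_lt_iff₀ hc] at hR
  linarith [hlb x hxS]

theorem Matrix.sum_mulVec_of_sum_col_eq_one {m n R : Type*} [Fintype m] [Fintype n]
    [CommSemiring R] {A : Matrix m n R} (hA : ∀ j, ∑ i, A i j = 1) (v : n → R) :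
    ∑ i, (A *ᵥ v) i = ∑ j, v j := by
  simp only [Matrix.mulVec, dotProduct]
  rw [sum_comm]
  simp [← sum_mul, hA]

theorem EuclideanSpace.norm_le_sum_of_nonneg {n : Type*} [Fintype n] {x : EuclideanSpace ℝ n}
    (hx : ∀ i, 0 ≤ x i) : ‖x‖ ≤ ∑ i, x i := by
  rw [EuclideanSpace.norm_eq, ← sqrt_sq (sum_nonneg fun i _ => hx i)]
  refine sqrt_le_sqrt ?_
  simpa only [norm_eq_abs, sq_abs] using sum_sq_le_sq_sum_of_nonneg fun i _ => hx i

/-- For `y = 0`, `log 0 = 0` realises the convention `0 · log (0 / t) = 0`. -/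
noncomputable def klTerm (y t : ℝ) : ℝ := y * log (y / t) + t - y

theorem klTerm_eq (y : ℝ) {t : ℝ} (ht : t ≠ 0) : klTerm y t = y * log y - y * log t + t - y := by
  rcases eq_or_ne y 0 with rfl | hy
  · simp [klTerm]
  · rw [klTerm, log_div hy ht]
    ring

theorem continuousOn_klTerm (y : ℝ) : ContinuousOn (klTerm y) (Ioi 0) := by
  refine ContinuousOn.congr ?_ fun t ht => klTerm_eq y (ne_of_gt ht)
  have : ContinuousOn log (Ioi 0) := continuousOn_log.mono fun t ht => ne_of_gt ht
  fun_prop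

theorem strictConvexOn_klTerm {y : ℝ} (hy : 0 < y) : StrictConvexOn ℝ (Ioi 0) (klTerm y) := by
  refine ⟨convex_Ioi 0, fun s hs t ht hst a b ha hb hab => ?_⟩
  have hlog := strictConcaveOn_log_Ioi.2 hs ht hst ha hb hab
  have hpos : 0 < a • s + b • t := (convex_Ioi 0) hs ht ha.le hb.le hab
  simp only [smul_eq_mul] at hlog hpos ⊢
  rw [klTerm_eq y hpos.ne', klTerm_eq y (ne_of_gt hs), klTerm_eq y (ne_of_gt ht)]
  linear_combination y * hlog + (y - y * log y) * hab

theorem half_sub_le_klTerm {y t : ℝ} (hy : 0 ≤ y) (ht : 0 < t) :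
    t / 2 - y * log 2 ≤ klTerm y t := by
  rcases hy.eq_or_lt with rfl | hy
  · simp [klTerm]; linarith
  have hlog := log_le_sub_one_of_pos (show 0 < t / (2 * y) by positivity)
  rw [log_div ht.ne' (by positivity), log_mul two_ne_zero hy.ne',
    div_sub_one (by positivity), le_div_iff₀ (by positivity)] at hlog
  rw [klTerm_eq y ht.ne']
  nlinarith

theorem half_sum_sub_le_sum_klTerm {ι : Type*} [Fintype ι] {y u : ι → ℝ} (hy : ∀ j, 0 ≤ y j)
    (hu : ∀ j, 0 < u j) : (∑ j, u j) / 2 - log 2 * ∑ j, y j ≤ ∑ j, klTerm (y j) (u j) := by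
  rw [sum_div, mul_sum, ← sum_sub_distrib]
  exact sum_le_sum fun j _ => by rw [mul_comm]; exact half_sub_le_klTerm (hy j) (hu j)

noncomputable def forwardMap {ι κ : Type*} [Fintype κ] (A : Matrix ι κ ℝ) (b : ι → ℝ) :
    EuclideanSpace ℝ κ →ᵃ[ℝ] (ι → ℝ) :=
  (A.mulVecLin ∘ₗ (WithLp.linearEquiv 2 ℝ (κ → ℝ)).toLinearMap).toAffineMap + AffineMap.const ℝ _ b

section forwardMap

variable {ι κ : Type*} [Fintype κ] {A : Matrix ι κ ℝ} {b : ι → ℝ}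

theorem forwardMap_apply (x : EuclideanSpace ℝ κ) (j : ι) :
    forwardMap A b x j = ∑ i, A j i * x i + b j :=
  rfl

theorem forwardMap_injective (hA : Function.Injective A.mulVec) :
    Function.Injective (forwardMap A b) := fun _ _ hxz =>
  WithLp.ofLp_injective 2 (hA (add_right_cancel (b := b) hxz))

theorem forwardMap_pos (hA : ∀ j i, 0 ≤ A j i) (hb : ∀ j, 0 < b j) {x : EuclideanSpace ℝ κ}
    (hx : ∀ i, 0 ≤ x i) (j : ι) : 0 < forwardMap A b x j :=
  add_pos_of_nonneg_of_pos (sum_nonneg fun i _ => mul_nonneg (hA j i) (hx i)) (hb j)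

theorem half_norm_sub_le_sum_klTerm_forwardMap [Fintype ι] (hA : ∀ j i, 0 ≤ A j i)
    (hAcol : ∀ i, ∑ j, A j i = 1) (hb : ∀ j, 0 < b j) {y : ι → ℝ} (hy : ∀ j, 0 ≤ y j)
    {x : EuclideanSpace ℝ κ} (hx : ∀ i, 0 ≤ x i) :
    ‖x‖ / 2 - log 2 * ∑ j, y j ≤ ∑ j, klTerm (y j) (forwardMap A b x j) := by
  have hKL := half_sum_sub_le_sum_klTerm hy (forwardMap_pos hA hb hx)
  have hsum : ∑ j, forwardMap A b x j = ∑ i, x i + ∑ j, b j := by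
    simp only [forwardMap_apply, sum_add_distrib]
    exact congrArg (· + _) (sum_mulVec_of_sum_col_eq_one hAcol x.ofLp)
  have hb0 : 0 ≤ ∑ j, b j := sum_nonneg fun j _ => (hb j).le
  linarith [EuclideanSpace.norm_le_sum_of_nonneg hx]

end forwardMap

theorem stmt_19_general {m n N : ℕ}
    (A : Matrix (Fin m) (Fin n) ℝ) (hA : ∀ i j, 0 ≤ A i j)
    (hAcol : ∀ j, ∑ i, A i j = 1)
    (b : Fin m → ℝ) (hb : ∀ j, 0 < b j)
    (y : Fin m → ℝ) (hy : ∀ j, 0 ≤ y j)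
    (lam : ℝ) (hlam : 0 < lam)
    (Lop : Fin N → EuclideanSpace ℝ (Fin n) →ₗ[ℝ] EuclideanSpace ℝ (Fin 2))
    (S : Set (EuclideanSpace ℝ (Fin n)))
    (hSne : S.Nonempty) (hScl : IsClosed S) (hSconv : Convex ℝ S)
    (hSsub : S ⊆ {x : EuclideanSpace ℝ (Fin n) | ∀ i, 0 ≤ x i})
    (Φ : EuclideanSpace ℝ (Fin n) → ℝ)
    (hΦ : ∀ x, Φ x =
      (∑ j, (y j * Real.log (y j / ((∑ i, A j i * x i) + b j)) +
        ((∑ i, A j i * x i) + b j) - y j)) +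
      lam * ∑ i, ‖Lop i x‖) :
    (∃ xstar ∈ S, ∀ z ∈ S, Φ xstar ≤ Φ z) ∧
    ((∀ j, 0 < y j) →
      Function.Injective (A.mulVec : (Fin n → ℝ) → (Fin m → ℝ)) →
      ∃! xstar : EuclideanSpace ℝ (Fin n), xstar ∈ S ∧ ∀ z ∈ S, Φ xstar ≤ Φ z) := by
  let F := forwardMap A b
  let TV : EuclideanSpace ℝ (Fin n) → ℝ := fun x => ∑ i, ‖Lop i x‖
  have hΦF : Φ = fun x => ∑ j, klTerm (y j) (F x j) + lam * TV x := funext hΦ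
  have hSF : S ⊆ F ⁻¹' univ.pi fun _ => Ioi 0 := fun x hx j _ => forwardMap_pos hA hb (hSsub hx) j
  have hTV : ConvexOn ℝ univ TV := convexOn_finsetSum convex_univ fun i _ =>
    (convexOn_norm convex_univ).comp_linearMap (Lop i)
  have hcont : ContinuousOn Φ S := hΦF ▸
    ((continuousOn_pi_sum fun j => continuousOn_klTerm (y j)).comp
        F.continuous_of_finiteDimensional.continuousOn hSF).add
      (continuous_const.mul (continuous_finsetSum _ fun i _ =>
        (Lop i).continuous_of_finiteDimensional.norm)).continuousOn
  have hcoercive : ∀ x ∈ S, 1 / 2 * ‖x‖ + -(log 2 * ∑ j, y j) ≤ Φ x := fun x hx => by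
    have hTV0 : 0 ≤ lam * TV x := mul_nonneg hlam.le (sum_nonneg fun i _ => norm_nonneg _)
    rw [hΦF]
    linarith [half_norm_sub_le_sum_klTerm_forwardMap hA hAcol hb hy (hSsub hx)]
  obtain ⟨xstar, hxstar, hmin⟩ :=
    hcont.exists_isMinOn_of_le_norm hScl hSne one_half_pos hcoercive
  refine ⟨⟨xstar, hxstar, hmin⟩, fun hypos hinj => ⟨xstar, ⟨hxstar, hmin⟩, ?_⟩⟩
  have hsc : StrictConvexOn ℝ S Φ := hΦF ▸
    (((strictConvexOn_pi_sum fun j => strictConvexOn_klTerm (hypos j)).comp_affineMap_of_injective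
        F (forwardMap_injective hinj)).subset hSF hSconv).add_convexOn
      ((hTV.smul hlam.le).subset (subset_univ S) hSconv)
  exact fun z ⟨hz, hzmin⟩ => hsc.eq_of_isMinOn hzmin hmin hz hxstar

theorem stmt_19 {m n N : ℕ} (hm : 0 < m) (hn : 0 < n)
    (A : Matrix (Fin m) (Fin n) ℝ) (hA : ∀ i j, 0 ≤ A i j)
    (hAcol : ∀ j, ∑ i, A i j = 1)
    (b : Fin m → ℝ) (hb : ∀ j, 0 < b j)
    (y : Fin m → ℝ) (hy : ∀ j, 0 ≤ y j)
    (lam : ℝ) (hlam : 0 < lam)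
    (Lop : Fin N → EuclideanSpace ℝ (Fin n) →ₗ[ℝ] EuclideanSpace ℝ (Fin 2))
    (S : Set (EuclideanSpace ℝ (Fin n)))
    (hSne : S.Nonempty) (hScl : IsClosed S) (hSconv : Convex ℝ S)
    (hSsub : S ⊆ {x : EuclideanSpace ℝ (Fin n) | ∀ i, 0 ≤ x i})
    (Φ : EuclideanSpace ℝ (Fin n) → ℝ)
    (hΦ : ∀ x, Φ x =
      (∑ j, (y j * Real.log (y j / ((∑ i, A j i * x i) + b j)) +
        ((∑ i, A j i * x i) + b j) - y j)) +
      lam * ∑ i, ‖Lop i x‖) :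
    (∃ xstar ∈ S, ∀ z ∈ S, Φ xstar ≤ Φ z) ∧
    ((∀ j, 0 < y j) →
      Function.Injective (A.mulVec : (Fin n → ℝ) → (Fin m → ℝ)) →
      ∃! xstar : EuclideanSpace ℝ (Fin n), xstar ∈ S ∧ ∀ z ∈ S, Φ xstar ≤ Φ z) :=
  stmt_19_general A hA hAcol b hb y hy lam hlam Lop S hSne hScl hSconv hSsub Φ hΦ
end
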